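/- arXiv:2510.13386 — 3 statements merged into one kernel-verified Lean document; each statement's English description precedes it below -/
import Mathlib

section
/- Let d ≥ 1 and n : Fin d → ℕ with each n k ≥ 1, and let A : (∀ k : Fin d, Fin (n k)) → ℝ be a d-th order tensor. For 1 ≤ k ≤ d−1, let A_k denote the k-th unfolding of A, i.e. the matrix whose rows are indexed by the tuples (i_1,…,i_k) of the first k indices, whose columns are indexed by the tuples (i_{k+1},…,i_d) of the last d−k indices, and whose ((i_1,…,i_k),(i_{k+1},…,i_d)) entry is A(i_1,…,i_d). Then there exist ranks r_0, r_1, …, r_d with r_0 = r_d = 1 and r_k = rank(A_k) for 1 ≤ k ≤ d−1, and core tensors G_k : Fin r_{k-1} → Fin (n k) → Fin r_k → ℝ for k = 1,…,d, such that for all indices, A(i_1,…,i_d) = Σ_{α_0=1}^{r_0} Σ_{α_1=1}^{r_1} ⋯ Σ_{α_d=1}^{r_d} G_1(α_0,i_1,α_1) G_2(α_1,i_2,α_2) ⋯ G_d(α_{d-1},i_d,α_d). -/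
/-!
Let `φ k` be a basis of the column space of the `k`-th unfolding, seen as functions of the first
`k` indices, with `φ 0 = 1` and `φ d = A`. Freezing `i_k` in a column of `A_{k+1}` yields a column
of `A_k`, so `φ (k+1) β (·, i_k) = ∑ α, φ k α · G_k(α, i_k, β)` for suitable coefficients; these
are the cores, and telescoping the recursion from `φ 0` to `φ d` expresses `A` as the train.
-/

/-- The `k`-th unfolding of a `d`-th order tensor `A`: the matrix whose rows are
indexed by the tuples of the first `k` indices, whose columns are indexed by the
tuples of the last `d − k` indices, and whose entries are the entries of `A`. -/
def ttUnfold {d : ℕ} {n : Fin d → ℕ} (A : (∀ i : Fin d, Fin (n i)) → ℝ) (k : ℕ) :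
    Matrix ((i : {i : Fin d // i.val < k}) → Fin (n i.1))
      ((i : {i : Fin d // ¬ i.val < k}) → Fin (n i.1)) ℝ :=
  fun row col => A fun i => if h : i.val < k then row ⟨i, h⟩ else col ⟨i, h⟩

open Matrix Module Submodule

theorem Fin.sum_mul_prod_chain {R : Type*} [CommSemiring R] {d : ℕ} {τ : Fin (d + 1) → Type*}
    [∀ j, Fintype (τ j)] (f : ∀ j, τ j → R) (w : ∀ k : Fin d, τ k.castSucc → τ k.succ → R)
    (hf : ∀ k b, f k.succ b = ∑ a, f k.castSucc a * w k a b) :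
    ∑ α : ∀ j, τ j, f 0 (α 0) * ∏ k, w k (α k.castSucc) (α k.succ) = ∑ b, f (Fin.last d) b := by
  induction d with
  | zero =>
    rw [← (Fin.consEquiv τ).sum_comp, Fintype.sum_prod_type]
    simp
  | succ d ih =>
    rw [← (Fin.consEquiv τ).sum_comp, Fintype.sum_prod_type, Finset.sum_comm]
    refine (Finset.sum_congr rfl fun α _ => ?_).trans
      (ih (τ := fun j => τ j.succ) (fun j => f j.succ) (fun k => w k.succ) fun k => hf k.succ)
    rw [hf 0, Finset.sum_mul]
    refine Finset.sum_congr rfl fun a _ => ?_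
    rw [Fin.prod_univ_succ, mul_assoc]
    rfl

theorem Matrix.rank_submatrix_of_surjective {R m n m₀ n₀ : Type*} [CommSemiring R]
    [StrongRankCondition R] [Fintype n] [Fintype n₀] (A : Matrix m n R) {r : m₀ → m} {c : n₀ → n}
    (hr : Function.Surjective r) (hc : Function.Surjective c) :
    (A.submatrix r c).rank = A.rank := by
  refine le_antisymm (rank_submatrix_le A r c) ?_
  have hA : (A.submatrix r c).submatrix (Function.surjInv hr) (Function.surjInv hc) = A := by
    ext i j
    simp [Function.surjInv_eq]
  calc A.rank = _ := by rw [hA]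
    _ ≤ _ := rank_submatrix_le _ _ _

section Splice

variable {d : ℕ} {ι : Fin d → Type*}

def splice (k : ℕ) (i j : ∀ t, ι t) : ∀ t, ι t := fun t => if t.val < k then i t else j t

@[simp]
theorem splice_zero (i j : ∀ t, ι t) : splice 0 i j = j := by
  funext t
  simp [splice]

theorem splice_of_le {k : ℕ} (hk : d ≤ k) (i j : ∀ t, ι t) : splice k i j = i := by
  funext t
  simp [splice, t.isLt.trans_le hk]

theorem splice_succ_update (k : Fin d) (y : ι k) (x j : ∀ t, ι t) :
    splice (k + 1) (Function.update x k y) j = splice k x (Function.update j k y) := by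
  funext t
  rcases lt_trichotomy t k with h | rfl | h
  · have h' : t.val < k.val := h
    simp [splice, h', h.ne, Nat.lt_succ_of_lt h']
  · simp [splice]
  · have h' : k.val < t.val := h
    simp [splice, h.ne', h'.not_gt, (Nat.succ_le_of_lt h').not_gt]

end Splice

section ColSpace

variable {R : Type*} [CommSemiring R] {d : ℕ} {ι : Fin d → Type*}
  (A : (∀ t, ι t) → R)

/-- `ttUnfold A k` re-indexed by full index tuples on both sides (rows read only the coordinates
below `k`, columns only the others): it has the same rank and avoids subtype-indexed tuples. -/
def ttUnfoldFull (k : ℕ) : Matrix (∀ t, ι t) (∀ t, ι t) R := Matrix.of fun i j => A (splice k i j)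

abbrev ttColSpace (k : ℕ) : Submodule R ((∀ t, ι t) → R) :=
  span R (Set.range (ttUnfoldFull A k).col)

theorem update_mem_ttColSpace {k : Fin d} {f : (∀ t, ι t) → R}
    (hf : f ∈ ttColSpace A (k.val + 1)) (y : ι k) :
    (fun x => f (Function.update x k y)) ∈ ttColSpace A k := by
  have hle : (ttColSpace A (k.val + 1)).map (LinearMap.funLeft R R (Function.update · k y)) ≤
      ttColSpace A k := by
    rw [Submodule.map_span_le]
    rintro _ ⟨j, rfl⟩
    refine subset_span ⟨Function.update j k y, ?_⟩
    funext x
    simp [ttUnfoldFull, Matrix.col, splice_succ_update]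
  exact hle (mem_map_of_mem hf)

theorem ttColSpace_zero_le : ttColSpace A 0 ≤ span R {1} := by
  rw [span_le]
  rintro _ ⟨j, rfl⟩
  refine mem_span_singleton.2 ⟨A j, ?_⟩
  funext x
  simp [ttUnfoldFull, Matrix.col]

theorem mem_ttColSpace_self (i₀ : ∀ t, ι t) : A ∈ ttColSpace A d :=
  subset_span ⟨i₀, by funext x; simp [ttUnfoldFull, Matrix.col, splice_of_le le_rfl]⟩

end ColSpace

theorem ttUnfold_rank_eq_finrank_ttColSpace {d : ℕ} {n : Fin d → ℕ}
    (A : (∀ t, Fin (n t)) → ℝ) (k : ℕ) (i₀ : ∀ t, Fin (n t)) :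
    (ttUnfold A k).rank = finrank ℝ (ttColSpace A k) := by
  have hsurj {p : Fin d → Prop} [DecidablePred p] :
      Function.Surjective fun (i : ∀ t, Fin (n t)) (t : {t // p t}) => i t := fun q =>
    ⟨fun t => if h : p t then q ⟨t, h⟩ else i₀ t, by funext t; simp [t.2]⟩
  calc (ttUnfold A k).rank = ((ttUnfold A k).submatrix _ _).rank :=
        (rank_submatrix_of_surjective _ hsurj hsurj).symm
    _ = (ttUnfoldFull A k).rank := rfl
    _ = finrank ℝ (ttColSpace A k) := rank_eq_finrank_span_cols _

theorem Module.Basis.span_coe_eq {R V ι : Type*} [Semiring R] [AddCommMonoid V] [Module R V]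
    {W : Submodule R V} (b : Basis ι R W) : span R (Set.range fun i => (b i : V)) = W := by
  rw [show (fun i => (b i : V)) = W.subtype ∘ b from rfl, Set.range_comp, span_image, b.span_eq,
    Submodule.map_top, range_subtype]

section Interface

variable {K : Type*} [Field K] {d : ℕ} {ι : Fin d → Type*} (A : (∀ t, ι t) → K)

noncomputable def ttRank (k : Fin (d + 1)) : ℕ :=
  if k = 0 ∨ k = Fin.last d then 1 else finrank K (ttColSpace A k)

theorem ttRank_zero : ttRank A 0 = 1 := by simp [ttRank]

theorem ttRank_last : ttRank A (Fin.last d) = 1 := by simp [ttRank]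

theorem ttRank_of_ne {k : Fin (d + 1)} (h0 : k ≠ 0) (hl : k ≠ Fin.last d) :
    ttRank A k = finrank K (ttColSpace A k) := by simp [ttRank, h0, hl]

variable [∀ j, Fintype (ι j)]

/-- A basis of `ttColSpace A k`, except at the two ends, where the rank is forced to be `1`:
there it is the constant `1` (`k = 0`) and the tensor `A` itself (`k = d`). -/
noncomputable def ttInterface (k : Fin (d + 1)) : Fin (ttRank A k) → (∀ t, ι t) → K :=
  if h : k = 0 ∨ k = Fin.last d then fun _ => if k = 0 then 1 else A
  else fun β => finBasisOfFinrankEq K (ttColSpace A k) (if_neg h).symm β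

theorem ttInterface_zero (β : Fin (ttRank A 0)) : ttInterface A 0 β = 1 := by
  simp [ttInterface]

theorem ttInterface_last (hd : d ≠ 0) (β : Fin (ttRank A (Fin.last d))) :
    ttInterface A (Fin.last d) β = A := by
  simp [ttInterface, (Fin.val_ne_zero_iff.1 hd : Fin.last d ≠ 0)]

theorem ttInterface_mem_ttColSpace (i₀ : ∀ t, ι t) {k : Fin (d + 1)} (h0 : k ≠ 0)
    (β : Fin (ttRank A k)) :
    ttInterface A k β ∈ ttColSpace A k := by
  by_cases hl : k = Fin.last d
  · subst hl
    simpa [ttInterface, h0] using mem_ttColSpace_self A i₀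
  · simp [ttInterface, h0, hl]

theorem ttColSpace_le_span_ttInterface {k : Fin (d + 1)} (hl : k ≠ Fin.last d) :
    ttColSpace A k ≤ span K (Set.range (ttInterface A k)) := by
  by_cases h0 : k = 0
  · subst h0
    refine (ttColSpace_zero_le A).trans (span_le.2 ?_)
    rintro _ rfl
    exact subset_span ⟨⟨0, by simp [ttRank_zero]⟩, ttInterface_zero A _⟩
  · have h : ¬(k = 0 ∨ k = Fin.last d) := by tauto
    rw [ttInterface, dif_neg h]
    exact (Module.Basis.span_coe_eq (finBasisOfFinrankEq K (ttColSpace A k) (if_neg h).symm)).ge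

theorem update_ttInterface_mem_span (i₀ : ∀ t, ι t) (k : Fin d) (β : Fin (ttRank A k.succ))
    (y : ι k) :
    (fun x => ttInterface A k.succ β (Function.update x k y)) ∈
      span K (Set.range (ttInterface A k.castSucc)) :=
  ttColSpace_le_span_ttInterface A (Fin.castSucc_ne_last k)
    (update_mem_ttColSpace A (ttInterface_mem_ttColSpace A i₀ (Fin.succ_ne_zero k) β) y)

end Interface

theorem exists_cores_of_update_mem_span {R : Type*} [CommSemiring R] {d : ℕ} {ι : Fin d → Type*}
    {r : Fin (d + 1) → ℕ} (φ : ∀ k, Fin (r k) → (∀ t, ι t) → R)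
    (h : ∀ (k : Fin d) β (y : ι k),
      (fun x => φ k.succ β (Function.update x k y)) ∈ span R (Set.range (φ k.castSucc))) :
    ∃ G : ∀ k : Fin d, Fin (r k.castSucc) → ι k → Fin (r k.succ) → R,
      ∀ k β i, φ k.succ β i = ∑ α, φ k.castSucc α i * G k α (i k) β := by
  choose c hc using fun k β y => (mem_span_range_iff_exists_fun R).1 (h k β y)
  refine ⟨fun k α y β => c k β y α, fun k β i => ?_⟩
  have := congrFun (hc k β (i k)) i
  simp only [Function.update_eq_self, Finset.sum_apply, Pi.smul_apply, smul_eq_mul] at this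
  simp only [← this, mul_comm]

/-- **Discrete tensor train decomposition.** Every `d`-th order tensor admits a
tensor train decomposition whose ranks are `1` at both ends and the ranks of the
unfolding matrices in between. -/
theorem discrete_tensor_train_decomposition
    (d : ℕ) (hd : 1 ≤ d) (n : Fin d → ℕ) (hn : ∀ k, 1 ≤ n k)
    (A : (∀ k : Fin d, Fin (n k)) → ℝ) :
    ∃ (r : Fin (d + 1) → ℕ)
      (G : ∀ k : Fin d, Fin (r k.castSucc) → Fin (n k) → Fin (r k.succ) → ℝ),
      r 0 = 1 ∧ r (Fin.last d) = 1 ∧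
      (∀ k : Fin (d + 1), 1 ≤ k.val → k.val ≤ d - 1 → r k = (ttUnfold A k.val).rank) ∧
      (∀ i : ∀ k : Fin d, Fin (n k),
        A i = ∑ α : ∀ j : Fin (d + 1), Fin (r j),
          ∏ k : Fin d, G k (α k.castSucc) (i k) (α k.succ)) := by
  let i₀ : ∀ k, Fin (n k) := fun k => ⟨0, hn k⟩
  obtain ⟨G, hG⟩ := exists_cores_of_update_mem_span (ttInterface A)
    (update_ttInterface_mem_span A i₀)
  refine ⟨ttRank A, G, ttRank_zero A, ttRank_last A, fun k h1 h2 => ?_, fun i => ?_⟩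
  · rw [ttRank_of_ne A (Fin.pos_iff_ne_zero.1 h1) (fun h => by simp [h] at h2; omega),
      ttUnfold_rank_eq_finrank_ttColSpace A k i₀]
  · calc A i = ∑ b, ttInterface A (Fin.last d) b i := by
          simp [ttInterface_last A (by omega), ttRank_last]
      _ = _ := (Fin.sum_mul_prod_chain (fun k β => ttInterface A k β i) _ fun k β => hG k β i).symm
      _ = _ := by simp [ttInterface_zero]
end

section
/- Let d ≥ 1, n : Fin d → ℕ, and let A : (∀ k : Fin d, Fin (n k)) → ℝ be a d-th order tensor. Suppose A admits a tensor train decomposition with ranks (s_0, s_1, …, s_d), i.e. there exist core tensors G_k : Fin s_{k-1} → Fin (n k) → Fin s_k → ℝ such that A(i_1,…,i_d) = Σ_{α_0,…,α_d} G_1(α_0,i_1,α_1)⋯G_d(α_{d-1},i_d,α_d) for all indices. Then for every k with 1 ≤ k ≤ d−1, the rank of the k-th unfolding matrix A_k satisfies rank(A_k) ≤ s_k. In particular, the ranks rank(A_k) are minimal among all possible tensor train ranks of A. -/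
namespace TTaux

variable {d : ℕ} {n : Fin d → ℕ} {s : Fin (d + 1) → ℕ}

def extFull (k0 : Fin (d + 1)) (β : Fin (s k0))
    (aL : ∀ j : {j : Fin (d + 1) // j.val < k0.val}, Fin (s j.1))
    (aR : ∀ j : {j : Fin (d + 1) // k0.val < j.val}, Fin (s j.1)) (j : Fin (d + 1)) :
    Fin (s j) :=
  if h : j.val < k0.val then aL ⟨j, h⟩
  else if h' : k0.val < j.val then aR ⟨j, h'⟩
  else (show k0 = j from Fin.ext (by omega)) ▸ β

def extL (k0 : Fin (d + 1)) (β : Fin (s k0))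
    (aL : ∀ j : {j : Fin (d + 1) // j.val < k0.val}, Fin (s j.1))
    (j : {j : Fin (d + 1) // j.val ≤ k0.val}) : Fin (s j.1) :=
  if h : j.1.val < k0.val then aL ⟨j.1, h⟩
  else (show k0 = j.1 from Fin.ext (by omega)) ▸ β

def extR (k0 : Fin (d + 1)) (β : Fin (s k0))
    (aR : ∀ j : {j : Fin (d + 1) // k0.val < j.val}, Fin (s j.1))
    (j : {j : Fin (d + 1) // k0.val ≤ j.val}) : Fin (s j.1) :=
  if h : k0.val < j.1.val then aR ⟨j.1, h⟩
  else (show k0 = j.1 from Fin.ext (by omega)) ▸ β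

lemma extFull_le (k0 : Fin (d + 1)) (β : Fin (s k0)) (aL) (aR) (j : Fin (d + 1))
    (h : j.val ≤ k0.val) : extFull k0 β aL aR j = extL k0 β aL ⟨j, h⟩ := by
  unfold extFull extL
  split_ifs <;> first | rfl | omega

lemma extFull_ge (k0 : Fin (d + 1)) (β : Fin (s k0)) (aL) (aR) (j : Fin (d + 1))
    (h : k0.val ≤ j.val) : extFull k0 β aL aR j = extR k0 β aR ⟨j, h⟩ := by
  unfold extFull extR
  split_ifs <;> first | rfl | omega

def tripleEquiv (k0 : Fin (d + 1)) :
    (Fin (s k0) × (∀ j : {j : Fin (d + 1) // j.val < k0.val}, Fin (s j.1)) ×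
      (∀ j : {j : Fin (d + 1) // k0.val < j.val}, Fin (s j.1))) ≃ (∀ j, Fin (s j)) where
  toFun p := extFull k0 p.1 p.2.1 p.2.2
  invFun α := (α k0, fun j => α j.1, fun j => α j.1)
  left_inv p := by
    obtain ⟨β, aL, aR⟩ := p
    refine Prod.ext ?_ (Prod.ext ?_ ?_)
    · show extFull k0 β aL aR k0 = β
      unfold extFull
      rw [dif_neg (lt_irrefl _), dif_neg (lt_irrefl _)]
    · funext j
      show extFull k0 β aL aR j.1 = aL j
      unfold extFull
      rw [dif_pos j.2]
    · funext j
      show extFull k0 β aL aR j.1 = aR j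
      unfold extFull
      rw [dif_neg (by omega : ¬ j.1.val < k0.val), dif_pos j.2]
  right_inv α := by
    funext j
    show extFull k0 (α k0) (fun j => α j.1) (fun j => α j.1) j = α j
    unfold extFull
    split_ifs with h1 h2
    · rfl
    · rfl
    · have hj : k0 = j := Fin.ext (by omega)
      subst hj
      rfl

def leftMat (G : ∀ k : Fin d, Fin (s k.castSucc) → Fin (n k) → Fin (s k.succ) → ℝ)
    (k0 : Fin (d + 1)) :
    Matrix ((i : {i : Fin d // i.val < k0.val}) → Fin (n i.1)) (Fin (s k0)) ℝ :=
  fun row β => ∑ aL : ∀ j : {j : Fin (d + 1) // j.val < k0.val}, Fin (s j.1),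
    ∏ kk : {i : Fin d // i.val < k0.val},
      G kk.1 (extL k0 β aL ⟨kk.1.castSucc, by simpa using kk.2.le⟩) (row kk)
        (extL k0 β aL ⟨kk.1.succ, by have := kk.2; simp [Fin.val_succ]; omega⟩)

def rightMat (G : ∀ k : Fin d, Fin (s k.castSucc) → Fin (n k) → Fin (s k.succ) → ℝ)
    (k0 : Fin (d + 1)) :
    Matrix (Fin (s k0)) ((i : {i : Fin d // ¬ i.val < k0.val}) → Fin (n i.1)) ℝ :=
  fun β col => ∑ aR : ∀ j : {j : Fin (d + 1) // k0.val < j.val}, Fin (s j.1),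
    ∏ kk : {i : Fin d // ¬ i.val < k0.val},
      G kk.1 (extR k0 β aR ⟨kk.1.castSucc, by have := kk.2; simpa using by omega⟩) (col kk)
        (extR k0 β aR ⟨kk.1.succ, by have := kk.2; simp [Fin.val_succ]; omega⟩)

lemma unfold_eq_mul (A : (∀ k : Fin d, Fin (n k)) → ℝ)
    (G : ∀ k : Fin d, Fin (s k.castSucc) → Fin (n k) → Fin (s k.succ) → ℝ)
    (hA : ∀ i : ∀ k : Fin d, Fin (n k),
      A i = ∑ α : ∀ j : Fin (d + 1), Fin (s j),
        ∏ k : Fin d, G k (α k.castSucc) (i k) (α k.succ))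
    (k0 : Fin (d + 1)) :
    ttUnfold A k0.val = leftMat G k0 * rightMat G k0 := by
  funext row col
  simp only [ttUnfold, Matrix.mul_apply, hA, leftMat, rightMat, Finset.sum_mul_sum]
  rw [← Equiv.sum_comp (tripleEquiv (s := s) k0)]
  rw [Fintype.sum_prod_type]
  refine Finset.sum_congr rfl fun β _ => ?_
  rw [Fintype.sum_prod_type]
  refine Finset.sum_congr rfl fun aL _ => Finset.sum_congr rfl fun aR _ => ?_
  show ∏ k : Fin d, G k (extFull k0 β aL aR k.castSucc) _ (extFull k0 β aL aR k.succ) = _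
  rw [← Fintype.prod_subtype_mul_prod_subtype (fun k : Fin d => k.val < k0.val)]
  congr 1
  · refine Finset.prod_congr rfl fun kk _ => ?_
    have h2 : kk.1.val < k0.val := kk.2
    rw [dif_pos h2, extFull_le k0 β aL aR _ (by simpa using h2.le),
      extFull_le k0 β aL aR _ (by simp [Fin.val_succ]; omega)]
  · refine Finset.prod_congr rfl fun kk _ => ?_
    have h2 : ¬ kk.1.val < k0.val := kk.2
    rw [dif_neg h2, extFull_ge k0 β aL aR _ (by simpa using by omega),
      extFull_ge k0 β aL aR _ (by simp [Fin.val_succ]; omega)]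

end TTaux

/-- **Minimality of the unfolding ranks.** If a `d`-th order tensor `A` admits a
tensor train decomposition with ranks `(s 0, …, s d)`, then for every
`1 ≤ k ≤ d − 1` the rank of the `k`-th unfolding matrix of `A` is at most `s k`;
hence the unfolding ranks are minimal among all possible TT-ranks of `A`. -/
theorem rank_unfolding_le_tt_rank
    (d : ℕ) (hd : 1 ≤ d) (n : Fin d → ℕ)
    (A : (∀ k : Fin d, Fin (n k)) → ℝ)
    (s : Fin (d + 1) → ℕ)
    (G : ∀ k : Fin d, Fin (s k.castSucc) → Fin (n k) → Fin (s k.succ) → ℝ)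
    (hA : ∀ i : ∀ k : Fin d, Fin (n k),
      A i = ∑ α : ∀ j : Fin (d + 1), Fin (s j),
        ∏ k : Fin d, G k (α k.castSucc) (i k) (α k.succ)) :
    ∀ k : Fin (d + 1), 1 ≤ k.val → k.val ≤ d - 1 →
      (ttUnfold A k.val).rank ≤ s k := by
  intro k _ _
  rw [TTaux.unfold_eq_mul A G hA k]
  calc (TTaux.leftMat G k * TTaux.rightMat G k).rank
      ≤ (TTaux.rightMat (n := n) (s := s) G k).rank := Matrix.rank_mul_le_right _ _
    _ ≤ Fintype.card (Fin (s k)) := Matrix.rank_le_card_height _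
    _ = s k := Fintype.card_fin _
end

section
/- Let X and Y be nonempty sets, r a natural number, and u : X × Y → ℝ. Suppose that for all m, n ≥ 1 and all sampling maps x : Fin m → X and y : Fin n → Y (repetitions allowed), the m × n matrix with entries u(x i, y j) has rank at most r. Then there exist functions g : Fin r → X → ℝ and h : Fin r → Y → ℝ such that u(a, b) = Σ_{α=1}^{r} g α a · h α b for all a ∈ X and b ∈ Y. -/
/-!
The slices `a ↦ u (a, ·)` span a space of dimension at most `r`. Indeed, if `k` functions
`f i : Y → K` are linearly independent, the value vectors `(f i y)ᵢ`, `y ∈ Y`, span `Kᵏ`: a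
linear functional vanishing on all of them has coefficients giving a linear relation among the
`f i`. Choosing `k` points whose value vectors form a basis yields a `k × k` sampled matrix of
rank `k`. Hence a maximal independent family of slices has at most `r` members; padded with
zeros it spans every slice, and expanding `u (a, ·)` in it gives `g` and `h`.
-/

open Submodule Set

section SpanBound

variable {K M ι : Type*} [DivisionRing K] [AddCommGroup M] [Module K M]

theorem exists_fin_mem_span_of_linearIndependent_card_le {v : ι → M} {r : ℕ}
    (h : ∀ k (x : Fin k → ι), LinearIndependent K (v ∘ x) → k ≤ r) :
    ∃ w : Fin r → M, ∀ i, v i ∈ span K (range w) := by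
  classical
  let P k := ∃ x : Fin k → ι, LinearIndependent K (v ∘ x)
  obtain ⟨x, hx⟩ : P (Nat.findGreatest P r) :=
    Nat.findGreatest_spec r.zero_le ⟨Fin.elim0, linearIndependent_empty_type⟩
  have hkr : Nat.findGreatest P r ≤ r := Nat.findGreatest_le r
  have hspan : ∀ i, v i ∈ span K (range (v ∘ x)) := by
    intro i
    by_contra hi
    have hcons : LinearIndependent K (v ∘ Fin.cons i x) := by
      rw [Fin.comp_cons]
      exact hx.finCons hi
    exact Nat.findGreatest_is_greatest (Nat.lt_succ_self _) (h _ _ hcons) ⟨_, hcons⟩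
  refine ⟨Function.extend (Fin.castLE hkr) (v ∘ x) 0, fun i => span_mono ?_ (hspan i)⟩
  calc range (v ∘ x)
      = range (Function.extend (Fin.castLE hkr) (v ∘ x) 0 ∘ Fin.castLE hkr) := by
        rw [Function.extend_comp (Fin.castLE_injective hkr)]
    _ ⊆ _ := range_comp_subset_range _ _

end SpanBound

section SampledMatrix

variable {K Y ι : Type*} [Field K] [Fintype ι]

theorem LinearIndependent.span_range_eval_eq_top {f : ι → Y → K}
    (hf : LinearIndependent K f) : span K (range fun y i => f i y) = ⊤ := by
  classical
  by_contra hne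
  obtain ⟨φ, hφ, hker⟩ := (span K (range fun y i => f i y)).exists_le_ker_of_lt_top
    (lt_top_iff_ne_top.2 hne)
  set c : ι → K := fun i => φ fun j => if i = j then 1 else 0
  have hc : ∑ i, c i • f i = 0 := by
    ext y
    have hy : φ (fun i => f i y) = 0 := hker (subset_span ⟨y, rfl⟩)
    rw [LinearMap.pi_apply_eq_sum_univ] at hy
    simpa [Finset.sum_apply, mul_comm] using hy
  have hc0 := Fintype.linearIndependent_iff.1 hf c hc
  refine hφ (LinearMap.ext fun x => ?_)
  rw [LinearMap.pi_apply_eq_sum_univ φ x]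
  change ∑ i, x i • c i = 0
  simp [hc0]

theorem LinearIndependent.exists_sampled_rank_eq_card {f : ι → Y → K}
    (hf : LinearIndependent K f) :
    ∃ y : ι → Y, (Matrix.of fun i j => f i (y j)).rank = Fintype.card ι := by
  obtain ⟨κ, a, -, hspan, hli⟩ := exists_linearIndependent' K fun y i => f i y
  rw [hf.span_range_eval_eq_top] at hspan
  let b : Module.Basis κ K (ι → K) := .mk hli hspan.ge
  let e := b.indexEquiv (Pi.basisFun K ι)
  refine ⟨a ∘ e.symm, ?_⟩
  have hcols : range (Matrix.of fun i j => f i ((a ∘ e.symm) j)).col =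
      range ((fun y i => f i y) ∘ a) := by
    rw [← e.symm.surjective.range_comp]
    rfl
  rw [Matrix.rank_eq_finrank_span_cols, hcols, hspan, finrank_top,
    Module.finrank_fintype_fun_eq_card]

end SampledMatrix

theorem bivariate_bounded_sample_rank_separable_general
    (X Y : Type*) (r : ℕ) (u : X × Y → ℝ)
    (hrank : ∀ (m n : ℕ), 1 ≤ m → 1 ≤ n → ∀ (x : Fin m → X) (y : Fin n → Y),
      (Matrix.of fun i j => u (x i, y j) : Matrix (Fin m) (Fin n) ℝ).rank ≤ r) :
    ∃ (g : Fin r → X → ℝ) (h : Fin r → Y → ℝ),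
      ∀ (a : X) (b : Y), u (a, b) = ∑ α : Fin r, g α a * h α b := by
  have hcard : ∀ k (x : Fin k → X), LinearIndependent ℝ (Function.curry u ∘ x) → k ≤ r := by
    intro k x hx
    rcases k.eq_zero_or_pos with rfl | hk
    · exact r.zero_le
    obtain ⟨y, hy⟩ := hx.exists_sampled_rank_eq_card
    calc k = (Matrix.of fun i j => (Function.curry u ∘ x) i (y j)).rank := by
          rw [hy, Fintype.card_fin]
      _ ≤ r := hrank k k hk hk x y
  obtain ⟨h, hh⟩ := exists_fin_mem_span_of_linearIndependent_card_le hcard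
  choose g hg using fun a => (mem_span_range_iff_exists_fun ℝ).1 (hh a)
  refine ⟨fun α a => g a α, h, fun a b => ?_⟩
  calc u (a, b) = (∑ α, g a α • h α) b := by rw [hg a]; rfl
    _ = _ := by simp [Finset.sum_apply]

/-- **Bivariate case of the functional tensor train decomposition.** If every
sampled matrix `(u (x i, y j))_{i,j}` of a bivariate function `u : X × Y → ℝ`
has rank at most `r`, then `u` admits a separable rank-`r` representation
`u (a, b) = Σ_{α} g α a * h α b`. -/
theorem bivariate_bounded_sample_rank_separable
    (X Y : Type*) (hX : Nonempty X) (hY : Nonempty Y) (r : ℕ) (u : X × Y → ℝ)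
    (hrank : ∀ (m n : ℕ), 1 ≤ m → 1 ≤ n → ∀ (x : Fin m → X) (y : Fin n → Y),
      (Matrix.of fun i j => u (x i, y j) : Matrix (Fin m) (Fin n) ℝ).rank ≤ r) :
    ∃ (g : Fin r → X → ℝ) (h : Fin r → Y → ℝ),
      ∀ (a : X) (b : Y), u (a, b) = ∑ α : Fin r, g α a * h α b :=
  bivariate_bounded_sample_rank_separable_general X Y r u hrank
end
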